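/- arXiv:1504.00730 — 2 statements merged into one kernel-verified Lean document; each statement's English description precedes it below -/
import Mathlib

section
/- Let a, b, c, d > 0, λ1 < 0, λ2 > 0, λ3 > 0, exponents 2 < q1 < q2 and p ≥ q1 - 1, with a = λ1 b + λ2 c + λ3 d. Then for all t > 1, q(t) := λ1 (q1-2) b + λ2 (q2-2) c t^{q2-q1} + λ3 (p-1) d t^{p+1-q1} > 0. -/
theorem stmt_4 (a b c d l1 l2 l3 q1 q2 p : ℝ)
    (ha : 0 < a) (hb : 0 < b) (hc : 0 < c) (hd : 0 < d)
    (hl1 : l1 < 0) (hl2 : 0 < l2) (hl3 : 0 < l3)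
    (hq1 : 2 < q1) (hq12 : q1 < q2) (hp : q1 - 1 ≤ p)
    (heq : a = l1 * b + l2 * c + l3 * d) :
    ∀ t : ℝ, 1 < t →
      l1 * (q1 - 2) * b + l2 * (q2 - 2) * c * t ^ (q2 - q1)
        + l3 * (p - 1) * d * t ^ (p + 1 - q1) > 0 := by
  intro t ht
  have h1 : (1:ℝ) ≤ t ^ (q2 - q1) := Real.one_le_rpow ht.le (by linarith)
  have h2 : (1:ℝ) ≤ t ^ (p + 1 - q1) := Real.one_le_rpow ht.le (by linarith)
  have e1 : l1 * b = a - l2 * c - l3 * d := by linarith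
  have hA : 0 ≤ (q2 - 2) * t ^ (q2 - q1) - (q1 - 2) := by nlinarith
  have hB : 0 ≤ (p - 1) * t ^ (p + 1 - q1) - (q1 - 2) := by nlinarith
  have k1 : 0 ≤ l2 * c * ((q2 - 2) * t ^ (q2 - q1) - (q1 - 2)) :=
    mul_nonneg (mul_pos hl2 hc).le hA
  have k2 : 0 ≤ l3 * d * ((p - 1) * t ^ (p + 1 - q1) - (q1 - 2)) :=
    mul_nonneg (mul_pos hl3 hd).le hB
  nlinarith [mul_pos (by linarith : (0:ℝ) < q1 - 2) ha]
end

section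
/- Let a, b, c, d > 0, λ1 < 0, λ2 > 0, λ3 < 0, exponents 2 < q1 < q2, 1 < p < q2 - 1, with a = λ1 b + λ2 c + λ3 d. Define g(t) = a - λ1 b t^{q1-2} - λ2 c t^{q2-2} - λ3 d t^{p-1}. Then t·g'(t) < 0 for every t > 1. -/
theorem stmt_5 (a b c d l1 l2 l3 q1 q2 p : ℝ)
    (ha : 0 < a) (hb : 0 < b) (hc : 0 < c) (hd : 0 < d)
    (hl1 : l1 < 0) (hl2 : 0 < l2) (hl3 : l3 < 0)
    (hq1 : 2 < q1) (hq12 : q1 < q2) (hp1 : 1 < p) (hp2 : p < q2 - 1)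
    (heq : a = l1 * b + l2 * c + l3 * d)
    (g : ℝ → ℝ)
    (hg : ∀ t : ℝ, g t = a - l1 * b * t ^ (q1 - 2) - l2 * c * t ^ (q2 - 2)
      - l3 * d * t ^ (p - 1)) :
    ∀ t : ℝ, 1 < t → t * deriv g t < 0 := by
  have hgf : g = fun t : ℝ => a - l1 * b * t ^ (q1 - 2) - l2 * c * t ^ (q2 - 2)
      - l3 * d * t ^ (p - 1) := funext hg
  subst hgf
  intro t ht
  have ht0 : (0:ℝ) < t := lt_trans one_pos ht
  have hne : t ≠ 0 := ne_of_gt ht0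
  have h1 : HasDerivAt (fun t : ℝ => t ^ (q1 - 2)) ((q1 - 2) * t ^ (q1 - 2 - 1)) t :=
    Real.hasDerivAt_rpow_const (Or.inl hne)
  have h2 : HasDerivAt (fun t : ℝ => t ^ (q2 - 2)) ((q2 - 2) * t ^ (q2 - 2 - 1)) t :=
    Real.hasDerivAt_rpow_const (Or.inl hne)
  have h3 : HasDerivAt (fun t : ℝ => t ^ (p - 1)) ((p - 1) * t ^ (p - 1 - 1)) t :=
    Real.hasDerivAt_rpow_const (Or.inl hne)
  have H : HasDerivAt (fun t : ℝ => a - l1 * b * t ^ (q1 - 2) - l2 * c * t ^ (q2 - 2)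
      - l3 * d * t ^ (p - 1))
      (0 - l1 * b * ((q1 - 2) * t ^ (q1 - 2 - 1)) - l2 * c * ((q2 - 2) * t ^ (q2 - 2 - 1))
        - l3 * d * ((p - 1) * t ^ (p - 1 - 1))) t :=
    (((hasDerivAt_const t a).sub (h1.const_mul (l1 * b))).sub
      (h2.const_mul (l2 * c))).sub (h3.const_mul (l3 * d))
  rw [H.deriv]
  have key : ∀ x : ℝ, t * t ^ (x - 1) = t ^ x := by
    intro x
    have h : t * t ^ (x - 1) = t ^ (1 + (x - 1)) := by
      rw [Real.rpow_add ht0, Real.rpow_one]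
    rw [h]; ring_nf
  set A := t ^ (q1 - 2) with hA
  set B := t ^ (q2 - 2) with hB
  set C := t ^ (p - 1) with hC
  have hAB : A < B := by
    rw [hA, hB]
    exact (Real.rpow_lt_rpow_left_iff ht).mpr (by linarith)
  have hCB : C < B := by
    rw [hC, hB]
    exact (Real.rpow_lt_rpow_left_iff ht).mpr (by linarith)
  have hApos : 0 < A := Real.rpow_pos_of_pos ht0 _
  have hBpos : 0 < B := Real.rpow_pos_of_pos ht0 _
  have hCpos : 0 < C := Real.rpow_pos_of_pos ht0 _
  have habs : t * (0 - l1 * b * ((q1 - 2) * t ^ (q1 - 2 - 1))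
      - l2 * c * ((q2 - 2) * t ^ (q2 - 2 - 1)) - l3 * d * ((p - 1) * t ^ (p - 1 - 1)))
      = -(l1 * b) * ((q1 - 2) * A) - l2 * c * ((q2 - 2) * B) - l3 * d * ((p - 1) * C) := by
    have k1 := key (q1 - 2)
    have k2 := key (q2 - 2)
    have k3 := key (p - 1)
    rw [hA, hB, hC]
    linear_combination (-(l1 * b * (q1 - 2))) * k1 + (-(l2 * c * (q2 - 2))) * k2
      + (-(l3 * d * (p - 1))) * k3
  rw [habs]
  have hlc : l2 * c = a - l1 * b - l3 * d := by linarith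
  rw [hlc]
  have hX1 : (q1 - 2) * A < (q2 - 2) * B :=
    mul_lt_mul (by linarith) (le_of_lt hAB) hApos (by linarith)
  have hX3 : (p - 1) * C < (q2 - 2) * B :=
    mul_lt_mul (by linarith) (le_of_lt hCB) hCpos (by linarith)
  nlinarith [mul_pos (mul_pos (neg_pos.mpr hl1) hb) (sub_pos.mpr hX1),
    mul_pos (mul_pos (neg_pos.mpr hl3) hd) (sub_pos.mpr hX3),
    mul_pos ha (mul_pos (show (0:ℝ) < q2 - 2 by linarith) hBpos)]
end
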